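/- Let 𝒪 := ω + ζ·η + ω*. Then the completion of 𝒪 satisfies 𝒞(𝒪) ≅ ω + 𝟏 + (Σ_{r∈ℝ} T_r) + 𝟏 + ω*, where T_r := 𝟏 + ζ + 𝟏 if r ∈ ℚ and T_r := 𝟏 if r is irrational. -/

import Mathlib

/-!
A completion `e : α ↪o C` is characterised by two properties: `C` is complete, and every point
of `C` outside the range of `e` is both the supremum and the infimum of nonempty sets of points
of `α`. Completions are therefore unique, each being isomorphic to the family of lower cuts
`e ⁻¹' Iic c` of `α` that it realises. The claimed order is then checked to be a completion piece
by piece: a single new point fills the gap between `ω` and `ζ·η`, and another the gap between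
`ζ·η` and `ω*`; inside `ζ·η = Σ_{q ∈ ℚ} ζ`, the copy of `ζ` over a rational `q` acquires a least
and a greatest point, and each irrational real contributes one new point, the supremum of the
rationals below it.
-/

/-- A linear order is (Dedekind) complete if every nonempty subset bounded above has a
least upper bound. -/
def IsCompleteLO (α : Type*) [LinearOrder α] : Prop :=
  ∀ s : Set α, s.Nonempty → BddAbove s → ∃ a, IsLUB s a

/-- `e : α ↪o β` exhibits `β` as a completion of `α`: `β` is complete and no proper
suborder of `β` containing (the image of) `α` is complete. -/
def IsCompletion {α β : Type*} [LinearOrder α] [LinearOrder β] (e : α ↪o β) : Prop :=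
  IsCompleteLO β ∧ ∀ S : Set β, Set.range e ⊆ S → IsCompleteLO S → S = Set.univ

open Set

section Complete

variable {α β : Type*} [LinearOrder α] [LinearOrder β]

theorem isCompleteLO_of_conditionallyCompleteLinearOrder (γ : Type*)
    [ConditionallyCompleteLinearOrder γ] : IsCompleteLO γ :=
  fun _ hne hbdd => ⟨_, isLUB_csSup hne hbdd⟩

theorem IsCompleteLO.of_orderIso (f : α ≃o β) (h : IsCompleteLO α) : IsCompleteLO β := by
  intro s hne hbdd
  obtain ⟨a, ha⟩ := h (f.symm '' s) (hne.image _) (f.symm.monotone.map_bddAbove hbdd)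
  exact ⟨f a, f.symm.isLUB_image.1 ha⟩

theorem IsLUB.of_subset_of_isCofinalFor {s t : Set α} {a : α} (ht : IsLUB t a) (hts : t ⊆ s)
    (hst : IsCofinalFor s t) : IsLUB s a :=
  ⟨fun _ hx => let ⟨_, hy, hxy⟩ := hst hx; hxy.trans (ht.1 hy),
    fun _ hu => ht.2 fun _ hy => hu (hts hy)⟩

theorem IsLUB.of_image_val {S : Set α} {s : Set S} {l : α} (hl : IsLUB (Subtype.val '' s) l)
    (hlS : l ∈ S) : IsLUB s ⟨l, hlS⟩ :=
  ⟨fun x hx => hl.1 ⟨x, hx, rfl⟩, fun y hy => hl.2 (by rintro _ ⟨x, hx, rfl⟩; exact hy hx)⟩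

theorem IsCompleteLO.exists_isGLB (h : IsCompleteLO α) {s : Set α} (hne : s.Nonempty)
    (hbdd : BddBelow s) : ∃ a, IsGLB s a :=
  let ⟨x, hx⟩ := hne
  let ⟨l, hl⟩ := h (lowerBounds s) hbdd ⟨x, fun _ hz => hz hx⟩
  ⟨l, fun _ hz => hl.2 fun _ hw => hw hz, hl.1⟩

theorem IsCompleteLO.subtype (h : IsCompleteLO α) {S : Set α}
    (hS : ∀ s ⊆ S, s.Nonempty → ∀ b ∈ S, b ∈ upperBounds s → ∀ l, IsLUB s l → l ∈ S) :
    IsCompleteLO S := by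
  intro s hne ⟨b, hb⟩
  have hbs : b.1 ∈ upperBounds (Subtype.val '' s) := by rintro _ ⟨x, hx, rfl⟩; exact hb hx
  obtain ⟨l, hl⟩ := h _ (hne.image _) ⟨b, hbs⟩
  exact ⟨_, hl.of_image_val (hS _ (Subtype.coe_image_subset _ _) (hne.image _) b b.2 hbs l hl)⟩

end Complete

section Completion

variable {α C D : Type*} [LinearOrder α] [LinearOrder C] [LinearOrder D] {e : α ↪o C}

namespace IsCompletion

theorem exists_apply_le (h : IsCompletion e) (c : C) : ∃ a, e a ≤ c := by
  refine eq_univ_iff_forall.1 (h.2 {x | ∃ a, e a ≤ x} ?_ (h.1.subtype ?_)) c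
  · rintro _ ⟨a, rfl⟩
    exact ⟨a, le_rfl⟩
  · intro s hs ⟨x, hx⟩ _ _ _ l hl
    obtain ⟨a, ha⟩ := hs hx
    exact ⟨a, ha.trans (hl.1 hx)⟩

theorem exists_le_apply (h : IsCompletion e) (c : C) : ∃ a, c ≤ e a := by
  refine eq_univ_iff_forall.1 (h.2 {x | ∃ a, x ≤ e a} ?_ (h.1.subtype ?_)) c
  · rintro _ ⟨a, rfl⟩
    exact ⟨a, le_rfl⟩
  · intro s _ _ b ⟨a, ha⟩ hb l hl
    exact ⟨a, (hl.2 hb).trans ha⟩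

theorem exists_apply_mem_Ioo (h : IsCompletion e) {x y c : C} (hc : c ∈ Ioo x y) :
    ∃ a, e a ∈ Ioo x y := by
  by_contra hno
  -- otherwise the complement of `Ioo x y` would be a smaller complete suborder containing `α`
  refine eq_univ_iff_forall.1 (h.2 (Ioo x y)ᶜ ?_ (h.1.subtype ?_)) c hc
  · rintro _ ⟨a, rfl⟩ ha
    exact hno ⟨a, ha⟩
  · intro s hs _ _ _ _ l hl ⟨hxl, hly⟩
    exact hxl.not_ge (hl.2 fun z hz => not_lt.1 fun hxz => hs hz ⟨hxz, (hl.1 hz).trans_lt hly⟩)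

theorem mem_range_of_covBy (h : IsCompletion e) {x c : C} (hxc : x ⋖ c ∨ c ⋖ x) :
    c ∈ range e := by
  by_contra hc
  refine eq_univ_iff_forall.1 (h.2 {c}ᶜ ?_ ?_) c rfl
  · rintro _ ⟨a, rfl⟩ hac
    exact hc ⟨a, hac⟩
  intro s hne ⟨b, hb⟩
  obtain ⟨l, hl⟩ := h.1 (Subtype.val '' s) (hne.image _) ⟨b, by rintro _ ⟨z, hz, rfl⟩; exact hb hz⟩
  by_cases hlc : l = c
  · subst hlc
    -- the neighbour `x` of the removed point takes over the role of the supremum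
    refine ⟨⟨x, fun hxl => ?_⟩, fun z hz => ?_, fun y hy => ?_⟩
    · rcases hxc with hxc | hxc
      exacts [hxc.lt.ne hxl, hxc.lt.ne hxl.symm]
    · have hzl : (z : C) < l := (hl.1 ⟨z, hz, rfl⟩).lt_of_ne z.2
      rcases hxc with hxc | hxc
      exacts [hxc.le_of_lt hzl, (hzl.trans hxc.lt).le]
    · have hly : l < y := (hl.2 (by rintro _ ⟨z, hz, rfl⟩; exact hy hz)).lt_of_ne (Ne.symm y.2)
      rcases hxc with hxc | hxc
      exacts [(hxc.lt.trans hly).le, not_lt.1 (hxc.2 hly)]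
  · exact ⟨_, hl.of_image_val hlc⟩

end IsCompletion

def IsTwoSidedLimit (e : α ↪o C) (c : C) : Prop :=
  (∃ s ⊆ range e, s.Nonempty ∧ IsLUB s c) ∧ ∃ s ⊆ range e, s.Nonempty ∧ IsGLB s c

namespace IsCompletion

theorem exists_isLUB (h : IsCompletion e) {c : C} (hc : c ∉ range e) :
    ∃ s ⊆ range e, s.Nonempty ∧ IsLUB s c := by
  obtain ⟨a₀, ha₀⟩ := h.exists_apply_le c
  have hne : (e '' {a | e a < c}).Nonempty :=
    ⟨e a₀, a₀, ha₀.lt_of_ne fun hac => hc ⟨a₀, hac⟩, rfl⟩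
  have hub : c ∈ upperBounds (e '' {a | e a < c}) := by rintro _ ⟨a, ha, rfl⟩; exact ha.le
  refine ⟨_, image_subset_range _ _, hne, ?_⟩
  obtain ⟨l, hl⟩ := h.1 _ hne ⟨c, hub⟩
  obtain rfl | hlc := (hl.2 hub).eq_or_lt
  · exact hl
  exfalso
  by_cases hmid : (Ioo l c).Nonempty
  · obtain ⟨a, hla, hac⟩ := h.exists_apply_mem_Ioo hmid.some_mem
    exact hla.not_ge (hl.1 ⟨a, hac, rfl⟩)
  · exact hc (h.mem_range_of_covBy (Or.inl ⟨hlc, fun z hlz hzc => hmid ⟨z, hlz, hzc⟩⟩))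

theorem exists_isGLB (h : IsCompletion e) {c : C} (hc : c ∉ range e) :
    ∃ s ⊆ range e, s.Nonempty ∧ IsGLB s c := by
  obtain ⟨a₀, ha₀⟩ := h.exists_le_apply c
  have hne : (e '' {a | c < e a}).Nonempty :=
    ⟨e a₀, a₀, ha₀.lt_of_ne fun hac => hc ⟨a₀, hac.symm⟩, rfl⟩
  have hlb : c ∈ lowerBounds (e '' {a | c < e a}) := by rintro _ ⟨a, ha, rfl⟩; exact ha.le
  refine ⟨_, image_subset_range _ _, hne, ?_⟩
  obtain ⟨l, hl⟩ := h.1.exists_isGLB hne ⟨c, hlb⟩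
  obtain rfl | hcl := (hl.2 hlb).eq_or_lt
  · exact hl
  exfalso
  by_cases hmid : (Ioo c l).Nonempty
  · obtain ⟨a, hca, hal⟩ := h.exists_apply_mem_Ioo hmid.some_mem
    exact hal.not_ge (hl.1 ⟨a, hca, rfl⟩)
  · exact hc (h.mem_range_of_covBy (Or.inr ⟨hcl, fun z hcz hzl => hmid ⟨z, hcz, hzl⟩⟩))

end IsCompletion

theorem isCompletion_iff :
    IsCompletion e ↔ IsCompleteLO C ∧ ∀ c ∉ range e, IsTwoSidedLimit e c := by
  refine ⟨fun h => ⟨h.1, fun c hc => ⟨h.exists_isLUB hc, h.exists_isGLB hc⟩⟩,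
    fun ⟨hC, h⟩ => ⟨hC, fun S hS hSc => eq_univ_of_forall fun d => ?_⟩⟩
  by_contra hd
  obtain ⟨⟨s, hsr, ⟨x, hx⟩, hs⟩, ⟨t, htr, ⟨y, hy⟩, ht⟩⟩ := h d fun hdr => hd (hS hdr)
  have hst : ∀ z ∈ s, ∀ w ∈ t, z ≤ w := fun z hz w hw => (hs.1 hz).trans (ht.1 hw)
  obtain ⟨σ, hσ⟩ := hSc (Subtype.val ⁻¹' s) ⟨⟨x, hS (hsr hx)⟩, hx⟩
    ⟨⟨y, hS (htr hy)⟩, fun z hz => hst z hz y hy⟩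
  have hdσ : d < σ := (hs.2 fun z hz => hσ.1 (show ⟨z, hS (hsr hz)⟩ ∈ Subtype.val ⁻¹' s from hz)
    ).lt_of_ne fun hdσ => hd (hdσ ▸ σ.2)
  -- an approximant of `d` from above would be an upper bound of `s` in `S` below `σ`
  obtain ⟨w, hw, hwσ⟩ := (isGLB_lt_iff ht).1 hdσ
  exact hwσ.not_ge (hσ.2 (show ⟨w, hS (htr hw)⟩ ∈ upperBounds _ from fun z hz => hst z hz w hw))

namespace IsCompletion

theorem preimage_Iic_subset_preimage_Iic_iff (h : IsCompletion e) {c c' : C} :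
    e ⁻¹' Iic c ⊆ e ⁻¹' Iic c' ↔ c ≤ c' := by
  refine ⟨fun hsub => not_lt.1 fun hlt => ?_, fun hle => preimage_mono (Iic_subset_Iic.2 hle)⟩
  have hno : ∀ a, e a ∉ Ioc c' c := fun a ha => ha.1.not_ge (hsub ha.2)
  have hcov : c' ⋖ c := ⟨hlt, fun z h₁ h₂ =>
    let ⟨a, ha⟩ := h.exists_apply_mem_Ioo ⟨h₁, h₂⟩; hno a (Ioo_subset_Ioc_self ha)⟩
  obtain ⟨a, rfl⟩ := h.mem_range_of_covBy (Or.inl hcov)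
  exact hno a ⟨hlt, le_rfl⟩

theorem exists_preimage_Iic_eq {f : α ↪o D} (hC : IsCompletion e) (hD : IsCompletion f) (c : C) :
    ∃ d, f ⁻¹' Iic d = e ⁻¹' Iic c := by
  obtain ⟨a₀, ha₀⟩ := hC.exists_apply_le c
  obtain ⟨a₁, ha₁⟩ := hC.exists_le_apply c
  obtain ⟨d, hd⟩ := hD.1 (f '' (e ⁻¹' Iic c)) ⟨f a₀, a₀, ha₀, rfl⟩
    ⟨f a₁, by rintro _ ⟨a, ha, rfl⟩; exact f.monotone (e.le_iff_le.1 (le_trans ha ha₁))⟩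
  refine ⟨d, Subset.antisymm (fun a had => not_lt.1 fun hca => ?_) fun a ha => hd.1 ⟨a, ha, rfl⟩⟩
  have hlt : ∀ b ∈ e ⁻¹' Iic c, b < a := fun b hb => e.lt_iff_lt.1 (lt_of_le_of_lt hb hca)
  have hda : f a = d := le_antisymm had
    (hd.2 (by rintro _ ⟨b, hb, rfl⟩; exact f.monotone (hlt b hb).le))
  -- `f a` is the supremum in `D` of the points below `c`, so no point of `α` lies strictly
  -- between `c` and `e a` in `C`
  have hcov : c ⋖ e a := ⟨hca, fun z hcz hza => by
    obtain ⟨b, hcb, hba⟩ := hC.exists_apply_mem_Ioo ⟨hcz, hza⟩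
    obtain ⟨_, ⟨b', hb', rfl⟩, hbb'⟩ :=
      (lt_isLUB_iff hd).1 (hda ▸ f.lt_iff_lt.2 (e.lt_iff_lt.1 hba))
    exact (hcb.trans (e.lt_iff_lt.2 (f.lt_iff_lt.1 hbb'))).not_ge hb'⟩
  obtain ⟨l, rfl⟩ := hC.mem_range_of_covBy (Or.inr hcov)
  have hdl : d ≤ f l := hd.2 (by rintro _ ⟨b, hb, rfl⟩; exact f.monotone (e.le_iff_le.1 hb))
  exact (f.lt_iff_lt.2 (hlt l le_rfl)).not_ge (hda ▸ hdl)

/-- Both completions are isomorphic to the family of lower cuts `e ⁻¹' Iic c` of `α` that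
they realise, and these families coincide. -/
theorem nonempty_orderIso {f : α ↪o D} (hC : IsCompletion e) (hD : IsCompletion f) :
    Nonempty (C ≃o D) := by
  let cutC : C ↪o Set α :=
    .ofMapLEIff (fun c => e ⁻¹' Iic c) fun _ _ => hC.preimage_Iic_subset_preimage_Iic_iff
  let cutD : D ↪o Set α :=
    .ofMapLEIff (fun d => f ⁻¹' Iic d) fun _ _ => hD.preimage_Iic_subset_preimage_Iic_iff
  have hrange : range cutC = range cutD := by
    ext L
    constructor
    · rintro ⟨c, rfl⟩
      exact hC.exists_preimage_Iic_eq hD c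
    · rintro ⟨d, rfl⟩
      exact hD.exists_preimage_Iic_eq hC d
  exact ⟨cutC.orderIso.trans ((OrderIso.setCongr _ _ hrange).trans cutD.orderIso.symm)⟩

end IsCompletion

end Completion

section Transfer

variable {α β C D : Type*} [LinearOrder α] [LinearOrder β] [LinearOrder C] [LinearOrder D]

theorem IsLUB.image_of_ordConnected_range {f : C ↪o D} (hf : (range f).OrdConnected)
    {s : Set C} (hs : s.Nonempty) {c : C} (h : IsLUB s c) : IsLUB (f '' s) (f c) := by
  refine ⟨by rintro _ ⟨x, hx, rfl⟩; exact f.monotone (h.1 hx), fun u hu => not_lt.1 fun hlt => ?_⟩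
  obtain ⟨x, hx⟩ := hs
  obtain ⟨v, rfl⟩ := hf.out ⟨x, rfl⟩ ⟨c, rfl⟩ ⟨hu ⟨x, hx, rfl⟩, hlt.le⟩
  exact hlt.not_ge (f.monotone (h.2 fun y hy => f.le_iff_le.1 (hu ⟨y, hy, rfl⟩)))

theorem IsGLB.image_of_ordConnected_range {f : C ↪o D} (hf : (range f).OrdConnected)
    {s : Set C} (hs : s.Nonempty) {c : C} (h : IsGLB s c) : IsGLB (f '' s) (f c) := by
  refine ⟨by rintro _ ⟨x, hx, rfl⟩; exact f.monotone (h.1 hx), fun u hu => not_lt.1 fun hlt => ?_⟩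
  obtain ⟨x, hx⟩ := hs
  obtain ⟨v, rfl⟩ := hf.out ⟨c, rfl⟩ ⟨x, rfl⟩ ⟨hlt.le, hu ⟨x, hx, rfl⟩⟩
  exact hlt.not_ge (f.monotone (h.2 fun y hy => f.le_iff_le.1 (hu ⟨y, hy, rfl⟩)))

theorem IsTwoSidedLimit.map {e : α ↪o C} {e' : β ↪o D} {f : C ↪o D}
    (hf : (range f).OrdConnected) (hfe : range (f ∘ e) ⊆ range e') {c : C}
    (hc : IsTwoSidedLimit e c) : IsTwoSidedLimit e' (f c) := by
  have himage : ∀ s ⊆ range e, f '' s ⊆ range e' := by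
    rintro s hs _ ⟨x, hx, rfl⟩
    obtain ⟨a, rfl⟩ := hs hx
    exact hfe ⟨a, rfl⟩
  obtain ⟨⟨s, hsr, hsn, hs⟩, ⟨t, htr, htn, ht⟩⟩ := hc
  exact ⟨⟨_, himage s hsr, hsn.image f, hs.image_of_ordConnected_range hf hsn⟩,
    ⟨_, himage t htr, htn.image f, ht.image_of_ordConnected_range hf htn⟩⟩

theorem isCompletion_refl (h : IsCompleteLO α) : IsCompletion (OrderIso.refl α).toOrderEmbedding :=
  isCompletion_iff.2 ⟨h, fun c hc => absurd ⟨c, rfl⟩ hc⟩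

end Transfer

section SumLex

variable {α β γ δ : Type*} [LinearOrder α] [LinearOrder β] [LinearOrder γ] [LinearOrder δ]

variable (α β) in
def OrderEmbedding.sumLexInl : α ↪o α ⊕ₗ β :=
  .ofMapLEIff (fun a => toLex (Sum.inl a)) fun _ _ => Sum.Lex.inl_le_inl_iff

variable (α β) in
def OrderEmbedding.sumLexInr : β ↪o α ⊕ₗ β :=
  .ofMapLEIff (fun b => toLex (Sum.inr b)) fun _ _ => Sum.Lex.inr_le_inr_iff

def OrderEmbedding.sumLexMap (f : α ↪o γ) (g : β ↪o δ) : α ⊕ₗ β ↪o γ ⊕ₗ δ :=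
  .ofMapLEIff (fun x => toLex ((ofLex x).map f g)) <| by
    rintro (a | b) (a' | b')
    · exact Sum.Lex.inl_le_inl_iff.trans (f.le_iff_le.trans Sum.Lex.inl_le_inl_iff.symm)
    · exact iff_of_true (Sum.Lex.inl_le_inr _ _) (Sum.Lex.inl_le_inr _ _)
    · exact iff_of_false Sum.Lex.not_inr_le_inl Sum.Lex.not_inr_le_inl
    · exact Sum.Lex.inr_le_inr_iff.trans (g.le_iff_le.trans Sum.Lex.inr_le_inr_iff.symm)

theorem ordConnected_range_sumLexInl : (range (OrderEmbedding.sumLexInl α β)).OrdConnected := by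
  refine IsLowerSet.ordConnected ?_
  rintro _ (a | b) h ⟨a', rfl⟩
  · exact ⟨a, rfl⟩
  · exact absurd h Sum.Lex.not_inr_le_inl

theorem ordConnected_range_sumLexInr : (range (OrderEmbedding.sumLexInr α β)).OrdConnected := by
  refine IsUpperSet.ordConnected ?_
  rintro _ (a | b) h ⟨b', rfl⟩
  · exact absurd h Sum.Lex.not_inr_le_inl
  · exact ⟨b, rfl⟩

theorem isLUB_sumLexInl_image_of_not_bddAbove {s : Set α} (hs : ¬BddAbove s) {b : β}
    (hb : IsBot b) : IsLUB (OrderEmbedding.sumLexInl α β '' s) (toLex (Sum.inr b)) := by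
  refine ⟨by rintro _ ⟨a, -, rfl⟩; exact Sum.Lex.inl_le_inr _ _, ?_⟩
  rintro (a | b') hu
  · exact absurd ⟨a, fun x hx => Sum.Lex.inl_le_inl_iff.1 (hu ⟨x, hx, rfl⟩)⟩ hs
  · exact Sum.Lex.inr_le_inr_iff.2 (hb b')

theorem isGLB_sumLexInr_image_of_not_bddBelow {s : Set β} (hs : ¬BddBelow s) {a : α}
    (ha : IsTop a) : IsGLB (OrderEmbedding.sumLexInr α β '' s) (toLex (Sum.inl a)) := by
  refine ⟨by rintro _ ⟨b, -, rfl⟩; exact Sum.Lex.inl_le_inr _ _, ?_⟩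
  rintro (a' | b) hu
  · exact Sum.Lex.inl_le_inl_iff.2 (ha a')
  · exact absurd ⟨b, fun x hx => Sum.Lex.inr_le_inr_iff.1 (hu ⟨x, hx, rfl⟩)⟩ hs

theorem isCompleteLO_sumLex (hα : IsCompleteLO α) (hβ : IsCompleteLO β)
    (h : (∃ a : α, IsTop a) ∨ ∃ b : β, IsBot b) : IsCompleteLO (α ⊕ₗ β) := by
  intro s hne ⟨u, hu⟩
  set sα := OrderEmbedding.sumLexInl α β ⁻¹' s
  set sβ := OrderEmbedding.sumLexInr α β ⁻¹' s
  by_cases hsβ : sβ.Nonempty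
  · obtain ⟨y, hy⟩ := hsβ
    rcases u with u | u
    · exact absurd (hu hy) Sum.Lex.not_inr_le_inl
    obtain ⟨l, hl⟩ := hβ sβ ⟨y, hy⟩ ⟨u, fun z hz => Sum.Lex.inr_le_inr_iff.1 (hu hz)⟩
    refine ⟨_, (hl.image_of_ordConnected_range ordConnected_range_sumLexInr ⟨y, hy⟩
      ).of_subset_of_isCofinalFor (image_preimage_subset _ _) ?_⟩
    rintro (a | b) hx
    exacts [⟨_, ⟨y, hy, rfl⟩, Sum.Lex.inl_le_inr _ _⟩, ⟨_, ⟨b, hx, rfl⟩, le_rfl⟩]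
  have hs : s = OrderEmbedding.sumLexInl α β '' sα := by
    refine (Subset.antisymm ?_ (image_preimage_subset _ _))
    rintro (a | b) hx
    exacts [⟨a, hx, rfl⟩, absurd ⟨b, hx⟩ hsβ]
  have hsα : sα.Nonempty := by
    obtain ⟨x, hx⟩ := hne
    rw [hs] at hx
    exact hx.imp fun _ h => h.1
  rw [hs]
  by_cases hbdd : BddAbove sα
  · obtain ⟨l, hl⟩ := hα sα hsα hbdd
    exact ⟨_, hl.image_of_ordConnected_range ordConnected_range_sumLexInl hsα⟩
  · obtain ⟨a, ha⟩ | ⟨b, hb⟩ := h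
    exacts [absurd ⟨a, fun x _ => ha x⟩ hbdd, ⟨_, isLUB_sumLexInl_image_of_not_bddAbove hbdd hb⟩]

end SumLex

section Gap

universe u

variable {α β γ δ : Type*} [LinearOrder α] [LinearOrder β] [LinearOrder γ] [LinearOrder δ]

theorem IsCompletion.not_bddAbove_range [NoMaxOrder α] {e : α ↪o γ} (h : IsCompletion e) :
    ¬BddAbove (range e) := by
  rintro ⟨c, hc⟩
  obtain ⟨a, ha⟩ := h.exists_le_apply c
  obtain ⟨a', ha'⟩ := exists_gt a
  exact (e.lt_iff_lt.2 ha').not_ge ((hc ⟨a', rfl⟩).trans ha)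

theorem IsCompletion.not_bddBelow_range [NoMinOrder α] {e : α ↪o γ} (h : IsCompletion e) :
    ¬BddBelow (range e) := by
  rintro ⟨c, hc⟩
  obtain ⟨a, ha⟩ := h.exists_apply_le c
  obtain ⟨a', ha'⟩ := exists_lt a
  exact (e.lt_iff_lt.2 ha').not_ge (ha.trans (hc ⟨a', rfl⟩))

theorem IsCompletion.sumLexMap_sumLexInr [Nonempty α] [Nonempty β] [NoMaxOrder α] [NoMinOrder β]
    {eα : α ↪o γ} {eβ : β ↪o δ} (hα : IsCompletion eα) (hβ : IsCompletion eβ) :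
    IsCompletion (eα.sumLexMap (eβ.trans (OrderEmbedding.sumLexInr PUnit.{u + 1} δ))) := by
  have hγ := isCompletion_iff.1 hα
  have hδ := isCompletion_iff.1 hβ
  refine isCompletion_iff.2 ⟨isCompleteLO_sumLex hγ.1 (isCompleteLO_sumLex
    (isCompleteLO_of_conditionallyCompleteLinearOrder PUnit) hδ.1 (Or.inl ⟨⊤, isTop_top⟩))
    (Or.inr ⟨⊥, isBot_bot⟩), ?_⟩
  set e := eα.sumLexMap (eβ.trans (OrderEmbedding.sumLexInr PUnit δ))
  rintro (c | (u | c)) hc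
  · have hc' : c ∉ range eα := fun ⟨a, ha⟩ => hc ⟨toLex (Sum.inl a), by rw [← ha]; rfl⟩
    refine (hγ.2 c hc').map (f := OrderEmbedding.sumLexInl γ _) (e' := e)
      ordConnected_range_sumLexInl ?_
    rintro _ ⟨a, rfl⟩
    exact ⟨toLex (Sum.inl a), rfl⟩
  · -- the new point is the supremum of `α` and the infimum of `β`
    obtain rfl : u = ⊤ := Subsingleton.elim _ _
    have hne := range_nonempty eβ
    refine ⟨⟨_, ?_, (range_nonempty eα).image _,
      isLUB_sumLexInl_image_of_not_bddAbove hα.not_bddAbove_range isBot_bot⟩,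
      ⟨_, ?_, (hne.image _).image _,
      (isGLB_sumLexInr_image_of_not_bddBelow (α := PUnit.{u + 1}) hβ.not_bddBelow_range isTop_top
        ).image_of_ordConnected_range (f := OrderEmbedding.sumLexInr γ _)
          ordConnected_range_sumLexInr (hne.image _)⟩⟩
    · rintro _ ⟨_, ⟨a, rfl⟩, rfl⟩
      exact ⟨toLex (Sum.inl a), rfl⟩
    · rintro _ ⟨_, ⟨_, ⟨b, rfl⟩, rfl⟩, rfl⟩
      exact ⟨toLex (Sum.inr b), rfl⟩
  · have hc' : c ∉ range eβ := fun ⟨b, hb⟩ => hc ⟨toLex (Sum.inr b), by rw [← hb]; rfl⟩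
    refine ((hδ.2 c hc').map (f := OrderEmbedding.sumLexInr PUnit δ)
      (e' := eβ.trans (OrderEmbedding.sumLexInr PUnit δ)) ordConnected_range_sumLexInr ?_).map
      (f := OrderEmbedding.sumLexInr γ _) (e' := e) ordConnected_range_sumLexInr ?_
    · rintro _ ⟨b, rfl⟩
      exact ⟨b, rfl⟩
    · rintro _ ⟨b, rfl⟩
      exact ⟨toLex (Sum.inr b), rfl⟩

end Gap

section SigmaLex

variable {ι : Type*} {T : ι → Type*} [LinearOrder ι] [∀ i, LinearOrder (T i)]

theorem monotone_sigmaLex_fst : Monotone fun x : Σₗ i, T i => (ofLex x).1 := by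
  rintro ⟨i, a⟩ ⟨j, b⟩ (⟨_, _, h⟩ | ⟨_, _, h⟩)
  exacts [h.le, le_rfl]

variable (T) in
def OrderEmbedding.sigmaLexMk (i : ι) : T i ↪o Σₗ i, T i :=
  .ofMapLEIff (fun t => toLex ⟨i, t⟩) fun _ _ =>
    ⟨fun h => by rcases h with ⟨_, _, h⟩ | ⟨_, _, h⟩; exacts [absurd h (lt_irrefl _), h],
      fun h => Sigma.Lex.right _ _ h⟩

theorem ordConnected_range_sigmaLexMk (i : ι) :
    (range (OrderEmbedding.sigmaLexMk T i)).OrdConnected := by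
  refine ⟨?_⟩
  rintro _ ⟨a, rfl⟩ _ ⟨b, rfl⟩ ⟨j, t⟩ ⟨h₁, h₂⟩
  obtain rfl : j = i :=
    le_antisymm (monotone_sigmaLex_fst h₂ : j ≤ i) (monotone_sigmaLex_fst h₁ : i ≤ j)
  exact ⟨t, rfl⟩

theorem isLUB_sigmaLex_of_isLUB_fst {s : Set (Σₗ i, T i)} {i : ι} {t : T i}
    (hs : IsLUB ((fun x => (ofLex x).1) '' s) i) (hlt : ∀ x ∈ s, (ofLex x).1 < i)
    (ht : IsBot t) : IsLUB s (toLex ⟨i, t⟩) := by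
  refine ⟨fun x hx => Sigma.Lex.left _ _ (hlt x hx), ?_⟩
  rintro ⟨j, u⟩ hu
  obtain hij | rfl :=
    (hs.2 (by rintro _ ⟨x, hx, rfl⟩; exact monotone_sigmaLex_fst (hu hx))).lt_or_eq
  exacts [Sigma.Lex.left _ _ hij, Sigma.Lex.right _ _ (ht u)]

theorem isGLB_sigmaLex_of_isGLB_fst {s : Set (Σₗ i, T i)} {i : ι} {t : T i}
    (hs : IsGLB ((fun x => (ofLex x).1) '' s) i) (hlt : ∀ x ∈ s, i < (ofLex x).1)
    (ht : IsTop t) : IsGLB s (toLex ⟨i, t⟩) := by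
  refine ⟨fun x hx => Sigma.Lex.left _ _ (hlt x hx), ?_⟩
  rintro ⟨j, u⟩ hu
  obtain hji | rfl :=
    (hs.2 (by rintro _ ⟨x, hx, rfl⟩; exact monotone_sigmaLex_fst (hu hx))).lt_or_eq
  exacts [Sigma.Lex.left _ _ hji, Sigma.Lex.right _ _ (ht u)]

theorem isCompleteLO_sigmaLex (hι : IsCompleteLO ι) (hT : ∀ i, IsCompleteLO (T i))
    (hbot : ∀ i, ∃ t : T i, IsBot t) (htop : ∀ i, ∃ t : T i, IsTop t) :
    IsCompleteLO (Σₗ i, T i) := by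
  intro s hne ⟨b, hb⟩
  obtain ⟨j, hj⟩ := hι _ (hne.image fun x => (ofLex x).1)
    ⟨(ofLex b).1, by rintro _ ⟨x, hx, rfl⟩; exact monotone_sigmaLex_fst (hb hx)⟩
  by_cases hjs : j ∈ (fun x => (ofLex x).1) '' s
  · obtain ⟨⟨j, t⟩, hx, rfl⟩ := hjs
    obtain ⟨m, hm⟩ := htop j
    obtain ⟨τ, hτ⟩ := hT j (OrderEmbedding.sigmaLexMk T j ⁻¹' s) ⟨t, hx⟩ ⟨m, fun u _ => hm u⟩
    refine ⟨_, (hτ.image_of_ordConnected_range (ordConnected_range_sigmaLexMk j) ⟨t, hx⟩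
      ).of_subset_of_isCofinalFor (image_preimage_subset _ _) ?_⟩
    rintro ⟨i, u⟩ hu
    obtain hij | rfl := (hj.1 ⟨_, hu, rfl⟩).lt_or_eq
    exacts [⟨_, ⟨t, hx, rfl⟩, Sigma.Lex.left _ _ hij⟩,
      ⟨_, ⟨u, hu, rfl⟩, le_rfl⟩]
  · obtain ⟨t, ht⟩ := hbot j
    exact ⟨_, isLUB_sigmaLex_of_isLUB_fst hj
      (fun x hx => (hj.1 ⟨x, hx, rfl⟩).lt_of_ne fun h => hjs ⟨x, hx, h⟩) ht⟩

end SigmaLex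

section SumLexMid

variable {α β γ : Type*} [LinearOrder α] [LinearOrder β] [LinearOrder γ]

variable (α β γ) in
def OrderEmbedding.sumLexMid : β ↪o α ⊕ₗ β ⊕ₗ γ :=
  (OrderEmbedding.sumLexInl β γ).trans (OrderEmbedding.sumLexInr α _)

theorem isGLB_range_sumLexMid [Nonempty β] [NoMinOrder β] {a : α} (ha : IsTop a) :
    IsGLB (range (OrderEmbedding.sumLexMid α β γ)) (toLex (Sum.inl a)) := by
  rw [OrderEmbedding.sumLexMid, RelEmbedding.coe_trans, range_comp]
  refine isGLB_sumLexInr_image_of_not_bddBelow ?_ ha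
  rintro ⟨b | c, hb⟩
  · obtain ⟨b', hb'⟩ := exists_lt b
    exact hb'.not_ge (Sum.Lex.inl_le_inl_iff.1 (hb ⟨b', rfl⟩))
  · exact Sum.Lex.not_inr_le_inl (hb ⟨Classical.arbitrary β, rfl⟩)

theorem isLUB_range_sumLexMid [Nonempty β] [NoMaxOrder β] {c : γ} (hc : IsBot c) :
    IsLUB (range (OrderEmbedding.sumLexMid α β γ)) (toLex (Sum.inr (toLex (Sum.inr c)))) := by
  have h := isLUB_sumLexInl_image_of_not_bddAbove (β := γ) (not_bddAbove_univ (α := β)) hc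
  rw [image_univ] at h
  rw [OrderEmbedding.sumLexMid, RelEmbedding.coe_trans, range_comp]
  exact h.image_of_ordConnected_range (f := OrderEmbedding.sumLexInr α _)
    ordConnected_range_sumLexInr (range_nonempty _)

end SumLexMid

section RatInt

universe u v w

variable {T : ℝ → Type*} [∀ r, LinearOrder (T r)]

theorem isLUB_ratCast_lt (r : ℝ) : IsLUB ((↑) '' {q : ℚ | (q : ℝ) < r}) r :=
  ⟨by rintro _ ⟨q, hq, rfl⟩; exact hq.le, fun _ hu => not_lt.1 fun hur =>
    let ⟨q, huq, hqr⟩ := exists_rat_btwn hur; huq.not_ge (hu ⟨q, hqr, rfl⟩)⟩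

theorem isGLB_ratCast_gt (r : ℝ) : IsGLB ((↑) '' {q : ℚ | r < q}) r :=
  ⟨by rintro _ ⟨q, hq, rfl⟩; exact hq.le, fun _ hu => not_lt.1 fun hru =>
    let ⟨q, hrq, hqu⟩ := exists_rat_btwn hru; hqu.not_ge (hu ⟨q, hrq, rfl⟩)⟩

def ratLexIntEmbedding (φ : ∀ q : ℚ, T q ≃o PUnit.{u + 1} ⊕ₗ ℤ ⊕ₗ PUnit.{v + 1}) :
    ℚ ×ₗ ℤ ↪o Σₗ r : ℝ, T r :=
  .ofStrictMono (fun p => toLex ⟨(ofLex p).1,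
    (φ (ofLex p).1).symm (OrderEmbedding.sumLexMid _ _ _ (ofLex p).2)⟩) <| by
    rintro ⟨q, z⟩ ⟨q', z'⟩ h
    obtain hq | ⟨rfl, hz⟩ := Prod.Lex.toLex_lt_toLex.1 h
    · exact Sigma.Lex.left _ _ (Rat.cast_lt.2 hq)
    · exact Sigma.Lex.right _ _ ((φ q).symm.strictMono
        ((OrderEmbedding.sumLexMid PUnit.{u + 1} ℤ PUnit.{v + 1}).strictMono hz))

variable (φ : ∀ q : ℚ, T q ≃o PUnit.{u + 1} ⊕ₗ ℤ ⊕ₗ PUnit.{v + 1})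

theorem exists_isLUB_ratLexIntEmbedding {r : ℝ} {t : T r} (ht : IsBot t) :
    ∃ s ⊆ range (ratLexIntEmbedding φ), s.Nonempty ∧ IsLUB s (toLex ⟨r, t⟩) := by
  refine ⟨(fun q : ℚ => ratLexIntEmbedding φ (toLex (q, 0))) '' {q | (q : ℝ) < r}, ?_,
    Nonempty.image _ (exists_rat_lt r), isLUB_sigmaLex_of_isLUB_fst ?_ ?_ ht⟩
  · rintro _ ⟨q, -, rfl⟩
    exact mem_range_self _
  · rw [image_image]
    exact isLUB_ratCast_lt r
  · rintro _ ⟨q, hq, rfl⟩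
    exact hq

theorem exists_isGLB_ratLexIntEmbedding {r : ℝ} {t : T r} (ht : IsTop t) :
    ∃ s ⊆ range (ratLexIntEmbedding φ), s.Nonempty ∧ IsGLB s (toLex ⟨r, t⟩) := by
  refine ⟨(fun q : ℚ => ratLexIntEmbedding φ (toLex (q, 0))) '' {q | r < (q : ℝ)}, ?_,
    Nonempty.image _ (exists_rat_gt r), isGLB_sigmaLex_of_isGLB_fst ?_ ?_ ht⟩
  · rintro _ ⟨q, -, rfl⟩
    exact mem_range_self _
  · rw [image_image]
    exact isGLB_ratCast_gt r
  · rintro _ ⟨q, hq, rfl⟩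
    exact hq

theorem exists_isGLB_ratLexIntEmbedding_symm_bot (q : ℚ) :
    ∃ s ⊆ range (ratLexIntEmbedding φ), s.Nonempty ∧ IsGLB s (toLex ⟨(q : ℝ), (φ q).symm ⊥⟩) := by
  refine ⟨OrderEmbedding.sigmaLexMk T q '' ((φ q).symm '' range (OrderEmbedding.sumLexMid _ _ _)),
    ?_, ((range_nonempty _).image _).image _,
    ((φ q).symm.isGLB_image'.2 (isGLB_range_sumLexMid isTop_top)).image_of_ordConnected_range
      (ordConnected_range_sigmaLexMk _) ((range_nonempty _).image _)⟩
  rintro _ ⟨_, ⟨_, ⟨z, rfl⟩, rfl⟩, rfl⟩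
  exact ⟨toLex (q, z), rfl⟩

theorem exists_isLUB_ratLexIntEmbedding_symm_top (q : ℚ) :
    ∃ s ⊆ range (ratLexIntEmbedding φ), s.Nonempty ∧ IsLUB s (toLex ⟨(q : ℝ), (φ q).symm ⊤⟩) := by
  refine ⟨OrderEmbedding.sigmaLexMk T q '' ((φ q).symm '' range (OrderEmbedding.sumLexMid _ _ _)),
    ?_, ((range_nonempty _).image _).image _,
    ((φ q).symm.isLUB_image'.2 (isLUB_range_sumLexMid isBot_bot)).image_of_ordConnected_range
      (ordConnected_range_sigmaLexMk _) ((range_nonempty _).image _)⟩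
  rintro _ ⟨_, ⟨_, ⟨z, rfl⟩, rfl⟩, rfl⟩
  exact ⟨toLex (q, z), rfl⟩

theorem isCompletion_ratLexIntEmbedding (ψ : ∀ r, Irrational r → T r ≃o PUnit.{w + 1}) :
    IsCompletion (ratLexIntEmbedding φ) := by
  have hsplit : ∀ r : ℝ, (∃ q : ℚ, (q : ℝ) = r) ∨ Irrational r := fun r =>
    (em (Irrational r)).symm.imp_left not_not.1
  have hsub : ∀ r, Irrational r → Subsingleton (T r) := fun r hr => (ψ r hr).injective.subsingleton
  have hfibre : ∀ r, IsCompleteLO (T r) ∧ (∃ t : T r, IsBot t) ∧ ∃ t : T r, IsTop t := by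
    intro r
    obtain ⟨q, rfl⟩ | hr := hsplit r
    · exact ⟨(isCompleteLO_sumLex (isCompleteLO_of_conditionallyCompleteLinearOrder _)
        (isCompleteLO_sumLex (isCompleteLO_of_conditionallyCompleteLinearOrder _)
          (isCompleteLO_of_conditionallyCompleteLinearOrder _) (Or.inr ⟨⊥, isBot_bot⟩))
        (Or.inl ⟨⊤, isTop_top⟩)).of_orderIso (φ q).symm,
        ⟨_, fun _ => (φ q).symm_apply_le.2 bot_le⟩, ⟨_, fun _ => (φ q).le_symm_apply.2 le_top⟩⟩
    · have := hsub r hr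
      exact ⟨(isCompleteLO_of_conditionallyCompleteLinearOrder _).of_orderIso (ψ r hr).symm,
        ⟨(ψ r hr).symm ⊥, fun _ => (Subsingleton.elim _ _).le⟩,
        ⟨(ψ r hr).symm ⊤, fun _ => (Subsingleton.elim _ _).le⟩⟩
  refine isCompletion_iff.2
    ⟨isCompleteLO_sigmaLex (isCompleteLO_of_conditionallyCompleteLinearOrder ℝ)
      (fun r => (hfibre r).1) (fun r => (hfibre r).2.1) (fun r => (hfibre r).2.2), ?_⟩
  rintro ⟨r, t⟩ hrt
  obtain ⟨q, rfl⟩ | hr := hsplit r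
  · obtain ⟨x, rfl⟩ := (φ q).symm.surjective t
    rcases x with u | (z | u)
    · obtain rfl : u = ⊥ := Subsingleton.elim _ _
      exact ⟨exists_isLUB_ratLexIntEmbedding φ fun _ => (φ q).symm_apply_le.2 bot_le,
        exists_isGLB_ratLexIntEmbedding_symm_bot φ q⟩
    · exact absurd ⟨toLex (q, z), rfl⟩ hrt
    · obtain rfl : u = ⊤ := Subsingleton.elim _ _
      exact ⟨exists_isLUB_ratLexIntEmbedding_symm_top φ q,
        exists_isGLB_ratLexIntEmbedding φ fun _ => (φ q).le_symm_apply.2 le_top⟩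
  · have := hsub r hr
    exact ⟨exists_isLUB_ratLexIntEmbedding φ fun _ => (Subsingleton.elim _ _).le,
      exists_isGLB_ratLexIntEmbedding φ fun _ => (Subsingleton.elim _ _).le⟩

end RatInt

/-- the completion of `𝒪 := ω + ζ·η + ω*` is
`ω + 𝟏 + (Σ_{r ∈ ℝ} T_r) + 𝟏 + ω*`, where `T_r = 𝟏 + ζ + 𝟏` for rational `r` and
`T_r = 𝟏` for irrational `r`. -/
theorem completion_of_omega_zeta_eta_omegaStar (C : Type) [LinearOrder C]
    (e : (ℕ ⊕ₗ (ℚ ×ₗ ℤ) ⊕ₗ ℕᵒᵈ) ↪o C) (hC : IsCompletion e)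
    (T : ℝ → Type) [∀ r, LinearOrder (T r)]
    (hTq : ∀ q : ℚ, Nonempty (T q ≃o (PUnit ⊕ₗ ℤ ⊕ₗ PUnit)))
    (hTirr : ∀ r : ℝ, Irrational r → Nonempty (T r ≃o PUnit)) :
    Nonempty (C ≃o (ℕ ⊕ₗ PUnit ⊕ₗ (Σₗ r : ℝ, T r) ⊕ₗ PUnit ⊕ₗ ℕᵒᵈ)) := by
  have hω := isCompletion_refl (isCompleteLO_of_conditionallyCompleteLinearOrder ℕ)
  have hωstar := isCompletion_refl (isCompleteLO_of_conditionallyCompleteLinearOrder ℕᵒᵈ)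
  have hζη := isCompletion_ratLexIntEmbedding (fun q => (hTq q).some) fun r hr => (hTirr r hr).some
  exact hC.nonempty_orderIso (hω.sumLexMap_sumLexInr (hζη.sumLexMap_sumLexInr hωstar))
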